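/- arXiv:2411.04875 — 2 statements merged into one kernel-verified Lean document; each statement's English description precedes it below -/
import Mathlib

section
/- Let A be a unital C*-algebra, x, z positive elements of A, y ∈ A, and φ a sub-multiplicative Orlicz function (φ(uv) ≤ φ(u)·φ(v) for all u, v ≥ 0). Then for every real r ≥ 2 and every 0 ≤ α ≤ 1, φ(v(x^α y z^{1−α})^r) ≤ φ(‖y‖^r)·‖α·φ(x^r) + (1 − α)·φ(z^r)‖, where the real powers x^α, z^{1−α}, x^r, z^r and the elements φ(x^r), φ(z^r) are taken by continuous functional calculus on the positive elements x and z. -/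
/-!
For a state `g` put `p = g(x^r)` and `q = g(z^r)`. Cauchy–Schwarz for `g` gives
`|g(x^α y z^{1-α})|² ≤ ‖y‖² g(x^{2α}) g(z^{2(1-α)})`, and since `r ≥ 2` the exponents `2α/r` and
`2(1-α)/r` are at most `1`, so Jensen's inequality for these concave powers bounds this by
`‖y‖² p^{2α/r} q^{2(1-α)/r}`. Raising to the power `r/2` and using weighted AM–GM,
`|g(·)|^r ≤ ‖y‖^r (αp + (1-α)q)`. Monotonicity, sub-multiplicativity and convexity of `φ`, followed
by Jensen's inequality `φ(g w) ≤ g(φ(w))` for states, turn this into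
`φ(|g(·)|^r) ≤ φ(‖y‖^r) g(αφ(x^r) + (1-α)φ(z^r))`, and states have norm `1`. Continuity of
`φ` carries the bound over to the supremum over all states.
-/

open scoped ComplexOrder

section

variable {A : Type*} [CStarAlgebra A] [PartialOrder A] [StarOrderedRing A]

/-- A positive linear functional on `A`: `f (x* x) ≥ 0` for all `x`. -/
def IsPosLF (f : A →ₗ[ℂ] ℂ) : Prop := ∀ x : A, 0 ≤ f (star x * x)

/-- A state on `A`: a positive linear functional with `g 1 = 1`. -/
def IsState (g : A →ₗ[ℂ] ℂ) : Prop := IsPosLF g ∧ g 1 = 1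

/-- The (algebraic) numerical radius `v(x) = sup {|g x| : g a state on A}`. -/
noncomputable def nr (x : A) : ℝ :=
  sSup {r : ℝ | ∃ g : A →ₗ[ℂ] ℂ, IsState g ∧ r = ‖g x‖}

/-- An Orlicz function: `φ : [0,∞) → [0,∞)` (modelled on `ℝ`) which is continuous, convex,
non-decreasing on `[0,∞)`, with `φ 0 = 0`, `φ u > 0` for `u > 0`, and `φ u → ∞` as `u → ∞`. -/
structure IsOrlicz (φ : ℝ → ℝ) : Prop where
  continuousOn : ContinuousOn φ (Set.Ici 0)
  convexOn : ConvexOn ℝ (Set.Ici 0) φ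
  monotoneOn : MonotoneOn φ (Set.Ici 0)
  map_zero : φ 0 = 0
  pos : ∀ u : ℝ, 0 < u → 0 < φ u
  tendsto_atTop : Filter.Tendsto φ Filter.atTop Filter.atTop

open Set

lemma ConvexOn.exists_affine_le_of_mem_interior {S : Set ℝ} {f : ℝ → ℝ} (hf : ConvexOn ℝ S f)
    {s : ℝ} (hs : s ∈ interior S) : ∃ d : ℝ, ∀ t ∈ S, f s + d * (t - s) ≤ f t := by
  refine ⟨derivWithin f (Ioi s) s, fun t ht => ?_⟩
  rcases lt_trichotomy t s with hts | rfl | hst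
  · have h := (hf.slope_le_leftDeriv_of_mem_interior ht hs hts).trans
      (hf.leftDeriv_le_rightDeriv_of_mem_interior hs)
    rw [slope_def_field, div_le_iff₀ (sub_pos.2 hts)] at h
    linarith
  · simp
  · have h := hf.rightDeriv_le_slope_of_mem_interior hs ht hst
    rw [slope_def_field, le_div_iff₀ (sub_pos.2 hst)] at h
    linarith

/-- At the boundary point `0` the horizontal line supports `f`, by monotonicity. -/
lemma ConvexOn.exists_affine_le_of_monotoneOn_Ici {f : ℝ → ℝ} (hf : ConvexOn ℝ (Ici 0) f)
    (hm : MonotoneOn f (Ici 0)) {s : ℝ} (hs : 0 ≤ s) :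
    ∃ d : ℝ, ∀ t, 0 ≤ t → f s + d * (t - s) ≤ f t := by
  rcases hs.eq_or_lt with rfl | hs
  · exact ⟨0, fun t ht => by simpa using hm (mem_Ici.2 le_rfl) ht ht⟩
  · exact hf.exists_affine_le_of_mem_interior (by rwa [interior_Ici])

lemma ContinuousOn.apply_csSup_le {α β : Type*} [ConditionallyCompleteLinearOrder α]
    [TopologicalSpace α] [OrderTopology α] [TopologicalSpace β] [Preorder β]
    [ClosedIicTopology β] {f : α → β} {S T : Set α} {B : β} (hT : IsClosed T)
    (hf : ContinuousOn f T) (hST : S ⊆ T) (hB : ∀ s ∈ S, f s ≤ B) (hne : S.Nonempty)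
    (hbdd : BddAbove S) : f (sSup S) ≤ B :=
  (closure_minimal (t := T ∩ f ⁻¹' Iic B) (fun s hs => ⟨hST hs, hB s hs⟩)
    (hf.preimage_isClosed_of_isClosed hT isClosed_Iic) (csSup_mem_closure hne hbdd)).2

namespace IsPosLF

variable {f : A →ₗ[ℂ] ℂ}

lemma map_nonneg (hf : IsPosLF f) {w : A} (hw : 0 ≤ w) : 0 ≤ f w := by
  obtain ⟨b, rfl⟩ := CStarAlgebra.nonneg_iff_eq_star_mul_self.mp hw
  exact hf b

noncomputable def toPositiveLinearMap (hf : IsPosLF f) : A →ₚ[ℂ] ℂ :=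
  PositiveLinearMap.mk₀ f fun _ => hf.map_nonneg

lemma re_nonneg (hf : IsPosLF f) {w : A} (hw : 0 ≤ w) : 0 ≤ (f w).re :=
  (Complex.nonneg_iff.mp (hf.map_nonneg hw)).1

lemma re_mono (hf : IsPosLF f) {v w : A} (h : v ≤ w) : (f v).re ≤ (f w).re :=
  (Complex.le_def.mp (OrderHomClass.mono hf.toPositiveLinearMap h)).1

lemma norm_apply_star_mul_sq_le (hf : IsPosLF f) (a b : A) :
    ‖f (star a * b)‖ ^ 2 ≤ (f (star a * a)).re * (f (star b * b)).re := by
  -- Cauchy–Schwarz in the GNS pre-Hilbert space of `f`, whose inner product is `f (star a * b)`.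
  set F := hf.toPositiveLinearMap
  have hsq : ∀ c : A, ‖F.toPreGNS c‖ ^ 2 = (f (star c * c)).re := fun c =>
    (congrArg (· ^ 2) (F.preGNS_norm_def _)).trans
      (Real.sq_sqrt (hf.re_nonneg (star_mul_self_nonneg c)))
  calc ‖f (star a * b)‖ ^ 2 = ‖inner ℂ (F.toPreGNS a) (F.toPreGNS b)‖ ^ 2 := rfl
    _ ≤ (‖F.toPreGNS a‖ * ‖F.toPreGNS b‖) ^ 2 := by gcongr; exact norm_inner_le_norm _ _
    _ = (f (star a * a)).re * (f (star b * b)).re := by rw [mul_pow, hsq, hsq]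

lemma norm_apply_mul_mul_sq_le (hf : IsPosLF f) (a y b : A) :
    ‖f (a * y * b)‖ ^ 2 ≤ ‖y‖ ^ 2 * (f (a * star a)).re * (f (star b * b)).re := by
  have hconj : a * y * star (a * y) ≤ ‖y‖ ^ 2 • (a * star a) := by
    have h := CStarAlgebra.star_right_conjugate_le_norm_smul (a := a) (b := y * star y)
    rw [CStarRing.norm_self_mul_star, ← sq] at h
    simpa only [star_mul, mul_assoc] using h
  have hre : (f (a * y * star (a * y))).re ≤ ‖y‖ ^ 2 * (f (a * star a)).re := by
    have h := hf.re_mono hconj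
    rwa [f.map_smul_of_tower, Complex.real_smul, Complex.re_ofReal_mul] at h
  calc ‖f (a * y * b)‖ ^ 2 = ‖f (star (star (a * y)) * b)‖ ^ 2 := by rw [star_star]
    _ ≤ (f (a * y * star (a * y))).re * (f (star b * b)).re := by
      simpa only [star_star] using hf.norm_apply_star_mul_sq_le (star (a * y)) b
    _ ≤ ‖y‖ ^ 2 * (f (a * star a)).re * (f (star b * b)).re := by
      gcongr
      exact hf.re_nonneg (star_mul_self_nonneg b)

end IsPosLF

namespace IsState

variable {g : A →ₗ[ℂ] ℂ}

lemma re_apply_le_norm (hg : IsState g) {w : A} (hw : 0 ≤ w) : (g w).re ≤ ‖w‖ := by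
  have h : ‖g w‖ ≤ ‖g 1‖ * ‖w‖ := hg.1.toPositiveLinearMap.norm_apply_le_of_nonneg w hw
  rw [hg.2, norm_one, one_mul] at h
  exact (Complex.re_le_norm _).trans h

lemma norm_apply_le (hg : IsState g) (m : A) : ‖g m‖ ≤ ‖m‖ := by
  have h := hg.1.norm_apply_star_mul_sq_le 1 m
  rw [star_one, one_mul, one_mul, hg.2, Complex.one_re, one_mul] at h
  have h' := hg.re_apply_le_norm (star_mul_self_nonneg m)
  rw [CStarRing.norm_star_mul_self, ← sq] at h'
  exact (pow_le_pow_iff_left₀ (norm_nonneg _) (norm_nonneg _) two_ne_zero).mp (h.trans h')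

lemma map_re_apply_le_re_apply_cfc (hg : IsState g) {f : ℝ → ℝ} (hc : ConvexOn ℝ (Ici 0) f)
    (hm : MonotoneOn f (Ici 0)) (hcont : ContinuousOn f (Ici 0)) {w : A} (hw : 0 ≤ w) :
    f (g w).re ≤ (g (cfc f w)).re := by
  set s := (g w).re
  obtain ⟨d, hd⟩ := hc.exists_affine_le_of_monotoneOn_Ici hm (hg.1.re_nonneg hw)
  have hspec : spectrum ℝ w ⊆ Ici 0 := fun t ht => spectrum_nonneg_of_nonneg hw ht
  have hle : cfc (fun t : ℝ => (f s - d * s) + d * t) w ≤ cfc f w :=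
    cfc_mono (fun t ht => by linarith [hd t (hspec ht)]) (by fun_prop) (hcont.mono hspec)
  have haffine : (g (cfc (fun t : ℝ => (f s - d * s) + d * t) w)).re = f s := by
    rw [cfc_const_add _ (fun t : ℝ => d * t) w, cfc_const_mul_id d w, map_add,
      Algebra.algebraMap_eq_smul_one, g.map_smul_of_tower, g.map_smul_of_tower, hg.2]
    simp [Complex.real_smul, s]
  exact haffine ▸ hg.1.re_mono hle

/-- The concave case `β ≤ 1` follows from the convex one applied to `t ↦ t ^ β⁻¹` at `w ^ β`. -/
lemma re_apply_rpow_le (hg : IsState g) {w : A} (hw : 0 ≤ w) {β : ℝ} (hβ0 : 0 ≤ β)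
    (hβ1 : β ≤ 1) : (g (w ^ β)).re ≤ (g w).re ^ β := by
  rcases hβ0.eq_or_lt with rfl | hβ
  · simp [CFC.rpow_zero w, hg.2]
  have hwβ : (0 : A) ≤ w ^ β := CFC.rpow_nonneg
  have hβinv : 0 ≤ β⁻¹ := inv_nonneg.2 hβ0
  have key := hg.map_re_apply_le_re_apply_cfc (convexOn_rpow ((one_le_inv₀ hβ).2 hβ1))
    (Real.monotoneOn_rpow_Ici_of_exponent_nonneg hβinv)
    (Real.continuous_rpow_const hβinv).continuousOn hwβ
  rw [← CFC.rpow_eq_cfc_real hwβ, CFC.rpow_rpow_of_exponent_nonneg w _ _ hβ0 hβinv,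
    mul_inv_cancel₀ hβ.ne', CFC.rpow_one w] at key
  calc (g (w ^ β)).re = ((g (w ^ β)).re ^ β⁻¹) ^ β :=
        (Real.rpow_inv_rpow (hg.1.re_nonneg hwβ) hβ.ne').symm
    _ ≤ (g w).re ^ β := Real.rpow_le_rpow (Real.rpow_nonneg (hg.1.re_nonneg hwβ) _) key hβ0

lemma re_apply_rpow_mul_self_le (hg : IsState g) {w : A} (hw : 0 ≤ w) {r γ : ℝ} (hr : 0 < r)
    (hγ0 : 0 ≤ γ) (hγr : 2 * γ ≤ r) :
    (g (w ^ γ * w ^ γ)).re ≤ (g (w ^ r)).re ^ (2 * γ / r) := by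
  have hsq : w ^ γ * w ^ γ = (w ^ r) ^ (2 * γ / r) := by
    rw [← sq, ← CFC.rpow_natCast (w ^ γ) 2, CFC.rpow_rpow_of_exponent_nonneg w _ _ hγ0 (by simp),
      CFC.rpow_rpow_of_exponent_nonneg w _ _ hr.le (by positivity)]
    congr 1
    push_cast
    field_simp
  rw [hsq]
  exact hg.re_apply_rpow_le CFC.rpow_nonneg (by positivity) ((div_le_one hr).2 hγr)

lemma norm_apply_rpow_mul_mul_rpow_le {x z : A} (hg : IsState g) (hx : 0 ≤ x) (hz : 0 ≤ z)
    (y : A) {r : ℝ} (hr : 2 ≤ r) {α : ℝ} (hα0 : 0 ≤ α) (hα1 : α ≤ 1) :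
    ‖g (x ^ α * y * z ^ (1 - α))‖ ^ r ≤
      ‖y‖ ^ r * ((g (x ^ r)).re ^ α * (g (z ^ r)).re ^ (1 - α)) := by
  have hr0 : 0 < r := by linarith
  have hp : 0 ≤ (g (x ^ r)).re := hg.1.re_nonneg CFC.rpow_nonneg
  have hq : 0 ≤ (g (z ^ r)).re := hg.1.re_nonneg CFC.rpow_nonneg
  have hx' := hg.re_apply_rpow_mul_self_le hx hr0 hα0 (by linarith)
  have hz' := hg.re_apply_rpow_mul_self_le hz hr0 (sub_nonneg.2 hα1) (by linarith)
  have hcs := hg.1.norm_apply_mul_mul_sq_le (x ^ α) y (z ^ (1 - α))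
  rw [(CFC.rpow_nonneg (a := x)).isSelfAdjoint.star_eq,
    (CFC.rpow_nonneg (a := z)).isSelfAdjoint.star_eq] at hcs
  have hsq : ‖g (x ^ α * y * z ^ (1 - α))‖ ^ (2 : ℝ) ≤
      ‖y‖ ^ (2 : ℝ) * (g (x ^ r)).re ^ (2 * α / r) * (g (z ^ r)).re ^ (2 * (1 - α) / r) := by
    simp only [Real.rpow_two]
    refine hcs.trans ?_
    gcongr
    · have hz2 := star_mul_self_nonneg (z ^ (1 - α))
      rw [(CFC.rpow_nonneg (a := z)).isSelfAdjoint.star_eq] at hz2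
      exact hg.1.re_nonneg hz2
  have hhalf : ∀ {u : ℝ} {c : ℝ}, 0 ≤ u → (u ^ (2 * c / r)) ^ (r / 2) = u ^ c := fun hu => by
    rw [← Real.rpow_mul hu]
    congr 1
    field_simp
  calc ‖g (x ^ α * y * z ^ (1 - α))‖ ^ r
      = (‖g (x ^ α * y * z ^ (1 - α))‖ ^ (2 : ℝ)) ^ (r / 2) := by
        rw [← Real.rpow_mul (norm_nonneg _)]; congr 1; ring
    _ ≤ (‖y‖ ^ (2 : ℝ) * (g (x ^ r)).re ^ (2 * α / r) * (g (z ^ r)).re ^ (2 * (1 - α) / r)) ^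
        (r / 2) := Real.rpow_le_rpow (by positivity) hsq (by positivity)
    _ = ‖y‖ ^ r * ((g (x ^ r)).re ^ α * (g (z ^ r)).re ^ (1 - α)) := by
        rw [Real.mul_rpow (by positivity) (by positivity),
          Real.mul_rpow (by positivity) (by positivity), hhalf hp, hhalf hq,
          ← Real.rpow_mul (norm_nonneg _)]
        ring_nf

end IsState

namespace IsOrlicz

variable {φ : ℝ → ℝ}

lemma nonneg (hφ : IsOrlicz φ) {u : ℝ} (hu : 0 ≤ u) : 0 ≤ φ u :=
  hφ.map_zero ▸ hφ.monotoneOn (mem_Ici.2 le_rfl) hu hu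

lemma le_mul_convex_combination (hφ : IsOrlicz φ)
    (hsub : ∀ u v : ℝ, 0 ≤ u → 0 ≤ v → φ (u * v) ≤ φ u * φ v)
    {m u p q α : ℝ} (hm : 0 ≤ m) (hu : 0 ≤ u) (hp : 0 ≤ p) (hq : 0 ≤ q) (hα0 : 0 ≤ α)
    (hα1 : α ≤ 1) (h : m ≤ u * (α * p + (1 - α) * q)) :
    φ m ≤ φ u * (α * φ p + (1 - α) * φ q) := by
  have hpq : 0 ≤ α * p + (1 - α) * q := by
    have := sub_nonneg.2 hα1
    positivity
  calc φ m ≤ φ (u * (α * p + (1 - α) * q)) := hφ.monotoneOn hm (mem_Ici.2 (mul_nonneg hu hpq)) h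
    _ ≤ φ u * φ (α * p + (1 - α) * q) := hsub _ _ hu hpq
    _ ≤ φ u * (α * φ p + (1 - α) * φ q) := by
        gcongr
        · exact hφ.nonneg hu
        · exact hφ.convexOn.2 hp hq hα0 (sub_nonneg.2 hα1) (by ring)

end IsOrlicz

lemma IsState.orlicz_norm_apply_rpow_le {g : A →ₗ[ℂ] ℂ} {x z : A} (hg : IsState g) (hx : 0 ≤ x)
    (hz : 0 ≤ z) (y : A) {φ : ℝ → ℝ} (hφ : IsOrlicz φ)
    (hsub : ∀ u v : ℝ, 0 ≤ u → 0 ≤ v → φ (u * v) ≤ φ u * φ v) {r : ℝ} (hr : 2 ≤ r) {α : ℝ}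
    (hα0 : 0 ≤ α) (hα1 : α ≤ 1) :
    φ (‖g (x ^ α * y * z ^ (1 - α))‖ ^ r) ≤
      φ (‖y‖ ^ r) * ‖(α : ℂ) • cfc φ (x ^ r) + ((1 - α : ℝ) : ℂ) • cfc φ (z ^ r)‖ := by
  set p := (g (x ^ r)).re
  set q := (g (z ^ r)).re
  have hp : 0 ≤ p := hg.1.re_nonneg CFC.rpow_nonneg
  have hq : 0 ≤ q := hg.1.re_nonneg CFC.rpow_nonneg
  have hamgm : p ^ α * q ^ (1 - α) ≤ α * p + (1 - α) * q :=
    Real.geom_mean_le_arith_mean2_weighted hα0 (sub_nonneg.2 hα1) hp hq (by ring)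
  have hφm := hφ.le_mul_convex_combination hsub (u := ‖y‖ ^ r) (by positivity) (by positivity)
    hp hq hα0 hα1
    ((hg.norm_apply_rpow_mul_mul_rpow_le hx hz y hr hα0 hα1).trans (by gcongr))
  have hjensen : ∀ {w : A}, 0 ≤ w → φ (g w).re ≤ (g (cfc φ w)).re :=
    hg.map_re_apply_le_re_apply_cfc hφ.convexOn hφ.monotoneOn hφ.continuousOn
  refine hφm.trans (mul_le_mul_of_nonneg_left ?_ (hφ.nonneg (by positivity)))
  calc α * φ p + (1 - α) * φ q
      ≤ α * (g (cfc φ (x ^ r))).re + (1 - α) * (g (cfc φ (z ^ r))).re := by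
        gcongr
        exacts [hjensen CFC.rpow_nonneg, hjensen CFC.rpow_nonneg]
    _ = (g ((α : ℂ) • cfc φ (x ^ r) + ((1 - α : ℝ) : ℂ) • cfc φ (z ^ r))).re := by simp
    _ ≤ ‖(α : ℂ) • cfc φ (x ^ r) + ((1 - α : ℝ) : ℂ) • cfc φ (z ^ r)‖ :=
        (Complex.re_le_norm _).trans (hg.norm_apply_le _)

/-- `sSup ∅ = 0` in `ℝ`, which is why `F 0 ≤ B` is needed when `A` has no states. -/
lemma apply_nr_le {F : ℝ → ℝ} {B : ℝ} (hF : ContinuousOn F (Ici 0)) (hF0 : F 0 ≤ B) (a : A)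
    (h : ∀ g : A →ₗ[ℂ] ℂ, IsState g → F ‖g a‖ ≤ B) : F (nr a) ≤ B := by
  rcases eq_empty_or_nonempty {r : ℝ | ∃ g : A →ₗ[ℂ] ℂ, IsState g ∧ r = ‖g a‖} with hS | hS
  · rwa [nr, hS, Real.sSup_empty]
  refine hF.apply_csSup_le isClosed_Ici ?_ ?_ hS ?_
  · rintro _ ⟨g, -, rfl⟩
    exact norm_nonneg _
  · rintro _ ⟨g, hg, rfl⟩
    exact h g hg
  · refine ⟨‖a‖, ?_⟩
    rintro _ ⟨g, hg, rfl⟩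
    exact hg.norm_apply_le a

/-- for positive `x, z`, a sub-multiplicative Orlicz function `φ`,
`r ≥ 2` and `0 ≤ α ≤ 1`, `φ(v(x^α y z^{1-α})^r) ≤ φ(‖y‖^r) ‖α φ(x^r) + (1-α) φ(z^r)‖`. -/
theorem stmt17 (x z : A) (hx : 0 ≤ x) (hz : 0 ≤ z) (y : A)
    (φ : ℝ → ℝ) (hφ : IsOrlicz φ)
    (hsub : ∀ u v : ℝ, 0 ≤ u → 0 ≤ v → φ (u * v) ≤ φ u * φ v)
    (r : ℝ) (hr : 2 ≤ r) (α : ℝ) (hα0 : 0 ≤ α) (hα1 : α ≤ 1) :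
    φ (nr (cfc (fun t : ℝ => t ^ α) x * y * cfc (fun t : ℝ => t ^ (1 - α)) z) ^ r) ≤
      φ (‖y‖ ^ r) *
        ‖(α : ℂ) • cfc φ (cfc (fun t : ℝ => t ^ r) x) +
          ((1 - α : ℝ) : ℂ) • cfc φ (cfc (fun t : ℝ => t ^ r) z)‖ := by
  have hr0 : 0 < r := by linarith
  simp only [← CFC.rpow_eq_cfc_real hx, ← CFC.rpow_eq_cfc_real hz]
  refine apply_nr_le (F := fun t => φ (t ^ r)) ?_ ?_ _
    fun g hg => hg.orlicz_norm_apply_rpow_le hx hz y hφ hsub hr hα0 hα1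
  · exact hφ.continuousOn.comp (Real.continuous_rpow_const hr0.le).continuousOn
      fun t ht => Real.rpow_nonneg ht r
  · rw [Real.zero_rpow hr0.ne', hφ.map_zero]
    exact mul_nonneg (hφ.nonneg (by positivity)) (norm_nonneg _)

end
end

section
/- Let A be a unital C*-algebra, p, q, r, s ∈ A, and x, y invertible elements of A. Then for every 0 ≤ α ≤ 1 and every real n ≥ 2, v(p x q + r y s) ≤ (1/n)·‖(p·|x*|^{2(1−α)}·p*)^{n/2} + (r·|y*|^{2(1−α)}·r*)^{n/2}‖ + ((n − 1)/n)·(‖q*·|x|^{2α}·q‖^{n/(2(n−1))} + ‖s*·|y|^{2α}·s‖^{n/(2(n−1))}), where |x| = (x*x)^{1/2}, |x*| = (x x*)^{1/2}, and all real powers of positive elements are taken by continuous functional calculus. -/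
open scoped ComplexOrder

section

variable {A : Type*} [CStarAlgebra A] [PartialOrder A] [StarOrderedRing A]

/-- The modulus `|w| = (w* w)^{1/2}` given by the continuous functional calculus. -/
noncomputable def absA (w : A) : A := cfc (fun t : ℝ => Real.sqrt t) (star w * w)

/-!
Write `c = x* x`. The element `u = x c^{-1/2}` is unitary and conjugates `c` to `x x*`, hence
`x c^γ x* = (x x*)^{γ+1}`. So `p x q = a* b` with `a = c^{-α/2} x* p*` and `b = c^{α/2} q`, where
`a* a = p |x*|^{2(1-α)} p*` and `b* b = q* |x|^{2α} q`. For a state `g`, Cauchy–Schwarz and Young's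
inequality with exponents `n` and `n/(n-1)` bound `|g(p x q)|` by
`g(a* a)^{n/2} / n + ((n-1)/n) g(b* b)^{n/(2(n-1))}`. Jensen's inequality `g(P)^{n/2} ≤ g(P^{n/2})`
(as `n/2 ≥ 1`) and `g(Q) ≤ ‖Q‖` finish the estimate of each of the two terms, and
`g(P₁^{n/2}) + g(P₂^{n/2}) ≤ ‖P₁^{n/2} + P₂^{n/2}‖` combines them.
-/

open CFC

lemma Real.rpow_tangent_line_le {e s t : ℝ} (he : 0 < e) (hs : 0 ≤ s) (ht : 1 ≤ t) :
    e ^ t + t * e ^ (t - 1) * (s - e) ≤ s ^ t := by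
  have hbern := one_add_mul_self_le_rpow_one_add (s := s / e - 1)
    (by linarith [div_nonneg hs he.le]) ht
  rw [add_sub_cancel, Real.div_rpow hs he.le, le_div_iff₀ (by positivity)] at hbern
  refine le_of_eq_of_le ?_ hbern
  rw [Real.rpow_sub_one he.ne', div_sub_one he.ne']
  ring

lemma Real.sqrt_mul_sqrt_le_young {a b n : ℝ} (ha : 0 ≤ a) (hb : 0 ≤ b) (hn : 1 < n) :
    √a * √b ≤ (1 / n) * a ^ (n / 2) + ((n - 1) / n) * b ^ (n / (2 * (n - 1))) := by
  have hconj : n.HolderConjugate (n / (n - 1)) := by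
    simpa [Real.conjExponent] using Real.HolderConjugate.conjExponent hn
  have hexp : 1 / 2 * (n / (n - 1)) = n / (2 * (n - 1)) := by
    rw [one_div_mul_eq_div, div_div, mul_comm]
  calc √a * √b ≤ √a ^ n / n + √b ^ (n / (n - 1)) / (n / (n - 1)) :=
        Real.young_inequality_of_nonneg (Real.sqrt_nonneg a) (Real.sqrt_nonneg b) hconj
    _ = _ := by
      rw [Real.sqrt_eq_rpow, Real.sqrt_eq_rpow, ← Real.rpow_mul ha, ← Real.rpow_mul hb, hexp,
        one_div_mul_eq_div, div_div_eq_mul_div]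
      ring

lemma IsPosLF.map_nonneg_s19 {g : A →ₗ[ℂ] ℂ} (hg : IsPosLF g) {a : A} (ha : 0 ≤ a) : 0 ≤ g a := by
  replace ha := StarOrderedRing.nonneg_iff.mp ha
  induction ha using AddSubmonoid.closure_induction with
  | mem _ hz => obtain ⟨s, rfl⟩ := hz; exact hg s
  | zero => simp
  | add _ _ _ _ hx hy => rw [map_add]; exact add_nonneg hx hy

noncomputable def IsPosLF.toPositiveLinearMap_s19 {g : A →ₗ[ℂ] ℂ} (hg : IsPosLF g) : A →ₚ[ℂ] ℂ :=
  .mk₀ g fun _ => hg.map_nonneg_s19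

lemma IsPosLF.re_apply_nonneg {g : A →ₗ[ℂ] ℂ} (hg : IsPosLF g) {a : A} (ha : 0 ≤ a) :
    0 ≤ (g a).re :=
  (Complex.nonneg_iff.mp (hg.map_nonneg_s19 ha)).1

lemma IsPosLF.re_apply_mono {g : A →ₗ[ℂ] ℂ} (hg : IsPosLF g) {a b : A} (hab : a ≤ b) :
    (g a).re ≤ (g b).re := by
  simpa using hg.re_apply_nonneg (sub_nonneg.mpr hab)

/- Cauchy–Schwarz for the semi-inner product `⟨a, b⟩ = g (a* b)` of the GNS construction. -/
lemma IsPosLF.norm_apply_star_mul_le {g : A →ₗ[ℂ] ℂ} (hg : IsPosLF g) (a b : A) :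
    ‖g (star a * b)‖ ≤ √(g (star a * a)).re * √(g (star b * b)).re :=
  norm_inner_le_norm (𝕜 := ℂ) (hg.toPositiveLinearMap_s19.toPreGNS a)
    (hg.toPositiveLinearMap_s19.toPreGNS b)

lemma IsState.re_apply_le_norm_s19 {g : A →ₗ[ℂ] ℂ} (hg : IsState g) {a : A} (ha : 0 ≤ a) :
    (g a).re ≤ ‖a‖ := by
  have : ‖g a‖ ≤ ‖g 1‖ * ‖a‖ := hg.1.toPositiveLinearMap_s19.norm_apply_le_of_nonneg a ha
  calc (g a).re ≤ ‖g a‖ := Complex.re_le_norm _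
    _ ≤ ‖a‖ := by simpa [hg.2] using this

omit [PartialOrder A] [StarOrderedRing A] in
lemma IsState.apply_algebraMap {g : A →ₗ[ℂ] ℂ} (hg : IsState g) (r : ℝ) :
    g (algebraMap ℝ A r) = r := by
  rw [Algebra.algebraMap_eq_smul_one, LinearMap.map_smul_of_tower, hg.2, Complex.real_smul,
    mul_one]

lemma IsState.rpow_re_apply_le {g : A →ₗ[ℂ] ℂ} (hg : IsState g) {a : A} (ha : 0 ≤ a) {t : ℝ}
    (ht : 1 ≤ t) : (g a).re ^ t ≤ (g (a ^ t)).re := by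
  rcases (hg.1.re_apply_nonneg ha).eq_or_lt with he | he
  · rw [← he, Real.zero_rpow (by linarith)]
    exact hg.1.re_apply_nonneg rpow_nonneg
  set e := (g a).re
  -- the tangent line of `s ↦ s ^ t` at `e = g a` lies below its graph, and `g` maps it to `e ^ t`
  have htangent :
      algebraMap ℝ A (e ^ t) + (t * e ^ (t - 1)) • (a - algebraMap ℝ A e) ≤ a ^ t := by
    rw [rpow_eq_cfc_real ha]
    calc _ = cfc (fun s : ℝ => e ^ t + t * e ^ (t - 1) * (s - e)) a := by
            rw [cfc_add .., cfc_const .., cfc_const_mul .., cfc_sub .., cfc_id' .., cfc_const ..]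
      _ ≤ _ := cfc_mono (hg := (Real.continuous_rpow_const (by linarith)).continuousOn)
            fun s hs => Real.rpow_tangent_line_le he (spectrum_nonneg_of_nonneg ha hs) ht
  simpa [hg.apply_algebraMap, e] using hg.1.re_apply_mono htangent

lemma absA_eq_sqrt (w : A) : absA w = sqrt (star w * w) := by
  rw [absA, sqrt_eq_real_sqrt _ (star_mul_self_nonneg w), cfcₙ_eq_cfc]

lemma isStrictlyPositive_star_mul_self {x : A} (hx : IsUnit x) :
    IsStrictlyPositive (star x * x) :=
  (hx.star.mul hx).isStrictlyPositive (star_mul_self_nonneg x)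

lemma cfc_rpow_two_mul_absA {x : A} (hx : IsUnit x) (β : ℝ) :
    cfc (fun t : ℝ => t ^ (2 * β)) (absA x) = (star x * x) ^ β := by
  have := isStrictlyPositive_star_mul_self hx
  rw [absA_eq_sqrt, ← rpow_eq_cfc_real, sqrt_eq_rpow, rpow_rpow _ _ _ (by norm_num)]
  ring_nf

lemma Unitary.conj_rpow {u a : A} (hu : u ∈ unitary A) (ha : IsStrictlyPositive a) (γ : ℝ) :
    (u * a * star u) ^ γ = u * a ^ γ * star u := by
  have hcont : ContinuousOn (fun t : NNReal => t ^ γ) (spectrum NNReal a) :=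
    NNReal.continuousOn_rpow_const (.inl (spectrum.zero_notMem NNReal ha.isUnit))
  simpa [rpow_def] using
    (StarAlgHomClass.map_cfc (S := ℂ) (Unitary.conjStarAlgAut ℂ A ⟨u, hu⟩) _ a hcont).symm

lemma rpow_neg_half_mul_rpow_mul_rpow_neg_half {c : A} (hc : IsStrictlyPositive c) (β : ℝ) :
    c ^ (-(1 / 2) : ℝ) * c ^ β * c ^ (-(1 / 2) : ℝ) = c ^ (β - 1) := by
  rw [← rpow_add hc.isUnit, ← rpow_add hc.isUnit]
  ring_nf

lemma rpow_neg_half_mul_mul_rpow_neg_half {c : A} (hc : IsStrictlyPositive c) :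
    c ^ (-(1 / 2) : ℝ) * c * c ^ (-(1 / 2) : ℝ) = 1 := by
  simpa [rpow_one c, rpow_zero c] using rpow_neg_half_mul_rpow_mul_rpow_neg_half hc 1

lemma star_mul_rpow_neg_half (x : A) :
    star (x * (star x * x) ^ (-(1 / 2) : ℝ)) = (star x * x) ^ (-(1 / 2) : ℝ) * star x := by
  rw [star_mul, (rpow_nonneg (a := star x * x)).isSelfAdjoint.star_eq]

lemma mul_rpow_neg_half_mem_unitary {x : A} (hx : IsUnit x) :
    x * (star x * x) ^ (-(1 / 2) : ℝ) ∈ unitary A := by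
  have hc := isStrictlyPositive_star_mul_self hx
  obtain ⟨u, hu⟩ := hx.mul (IsStrictlyPositive.rpow _ (-(1 / 2) : ℝ) hc).isUnit
  have hstar_eq : star (u : A) = ↑u⁻¹ := by
    rw [← Units.mul_eq_one_iff_eq_inv, hu, star_mul_rpow_neg_half,
      ← rpow_neg_half_mul_mul_rpow_neg_half hc]
    simp only [mul_assoc]
  rw [← hu]
  exact Unitary.mem_iff.mpr ⟨by rw [hstar_eq, Units.inv_mul], by rw [hstar_eq, Units.mul_inv]⟩

lemma mul_rpow_star_mul_self_mul_star {x : A} (hx : IsUnit x) (γ : ℝ) :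
    x * (star x * x) ^ γ * star x = (x * star x) ^ (γ + 1) := by
  have hc := isStrictlyPositive_star_mul_self hx
  have hd : (x * (star x * x) ^ (-(1 / 2) : ℝ)) * (star x * x) *
      star (x * (star x * x) ^ (-(1 / 2) : ℝ)) = x * star x := by
    calc _ = x * ((star x * x) ^ (-(1 / 2) : ℝ) * (star x * x) * (star x * x) ^ (-(1 / 2) : ℝ))
          * star x := by rw [star_mul_rpow_neg_half]; simp only [mul_assoc]
      _ = x * star x := by rw [rpow_neg_half_mul_mul_rpow_neg_half hc, mul_one]
  have hsandwich := rpow_neg_half_mul_rpow_mul_rpow_neg_half hc (γ + 1)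
  rw [add_sub_cancel_right] at hsandwich
  rw [← hd, Unitary.conj_rpow (mul_rpow_neg_half_mem_unitary hx) hc, star_mul_rpow_neg_half,
    ← hsandwich]
  simp only [mul_assoc]

lemma IsPosLF.norm_apply_mul_mul_le_sqrt_mul_sqrt {g : A →ₗ[ℂ] ℂ} (hg : IsPosLF g) (p q : A)
    {x : A} (hx : IsUnit x) (α : ℝ) :
    ‖g (p * x * q)‖ ≤ √(g (p * (x * star x) ^ (1 - α) * star p)).re *
      √(g (star q * (star x * x) ^ α * q)).re := by
  have hc := isStrictlyPositive_star_mul_self hx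
  have hstar : ∀ β : ℝ, star ((star x * x) ^ β) = (star x * x) ^ β :=
    fun β => rpow_nonneg.isSelfAdjoint.star_eq
  have hmul : ∀ β γ : ℝ, (star x * x) ^ β * (star x * x) ^ γ = (star x * x) ^ (β + γ) :=
    fun β γ => (rpow_add hc.isUnit).symm
  have hab : star ((star x * x) ^ (-α / 2) * star x * star p) * ((star x * x) ^ (α / 2) * q)
      = p * x * q := by
    calc _ = p * x * ((star x * x) ^ (-α / 2) * (star x * x) ^ (α / 2)) * q := by
          simp only [star_mul, star_star, hstar, mul_assoc]
      _ = p * x * q := by rw [hmul, neg_div, neg_add_cancel, rpow_zero _ hc.nonneg, mul_one]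
  have haa : star ((star x * x) ^ (-α / 2) * star x * star p) *
      ((star x * x) ^ (-α / 2) * star x * star p) = p * (x * star x) ^ (1 - α) * star p := by
    calc _ = p * (x * ((star x * x) ^ (-α / 2) * (star x * x) ^ (-α / 2)) * star x) * star p := by
          simp only [star_mul, star_star, hstar, mul_assoc]
      _ = _ := by rw [hmul, add_halves, mul_rpow_star_mul_self_mul_star hx, neg_add_eq_sub]
  have hbb : star ((star x * x) ^ (α / 2) * q) * ((star x * x) ^ (α / 2) * q)
      = star q * (star x * x) ^ α * q := by
    calc _ = star q * ((star x * x) ^ (α / 2) * (star x * x) ^ (α / 2)) * q := by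
          simp only [star_mul, hstar, mul_assoc]
      _ = _ := by rw [hmul, add_halves]
  simpa only [hab, haa, hbb] using hg.norm_apply_star_mul_le
    ((star x * x) ^ (-α / 2) * star x * star p) ((star x * x) ^ (α / 2) * q)

lemma IsState.norm_apply_mul_mul_le {g : A →ₗ[ℂ] ℂ} (hg : IsState g) (p q : A) {x : A}
    (hx : IsUnit x) (α : ℝ) {n : ℝ} (hn : 2 ≤ n) :
    ‖g (p * x * q)‖ ≤ (1 / n) * (g ((p * (x * star x) ^ (1 - α) * star p) ^ (n / 2))).re +
      ((n - 1) / n) * ‖star q * (star x * x) ^ α * q‖ ^ (n / (2 * (n - 1))) := by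
  have hP := star_right_conjugate_nonneg (rpow_nonneg (a := x * star x) (y := 1 - α)) p
  have hQ := star_left_conjugate_nonneg (rpow_nonneg (a := star x * x) (y := α)) q
  have hn0 : 0 < n := by linarith
  calc ‖g (p * x * q)‖
      ≤ √(g (p * (x * star x) ^ (1 - α) * star p)).re *
          √(g (star q * (star x * x) ^ α * q)).re :=
        hg.1.norm_apply_mul_mul_le_sqrt_mul_sqrt p q hx α
    _ ≤ (1 / n) * (g (p * (x * star x) ^ (1 - α) * star p)).re ^ (n / 2) +
          ((n - 1) / n) * (g (star q * (star x * x) ^ α * q)).re ^ (n / (2 * (n - 1))) :=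
        Real.sqrt_mul_sqrt_le_young (hg.1.re_apply_nonneg hP) (hg.1.re_apply_nonneg hQ)
          (by linarith)
    _ ≤ _ := by
      have hcoef : 0 ≤ (n - 1) / n := div_nonneg (by linarith) hn0.le
      have hexp : 0 ≤ n / (2 * (n - 1)) := div_nonneg hn0.le (by linarith)
      have hgQ := hg.1.re_apply_nonneg hQ
      gcongr
      · exact hg.rpow_re_apply_le hP (by linarith)
      · exact hg.re_apply_le_norm_s19 hQ

theorem stmt19_general (p q r s x y : A) (hx : IsUnit x) (hy : IsUnit y)
    (α : ℝ) (n : ℝ) (hn : 2 ≤ n) :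
    nr (p * x * q + r * y * s) ≤
      (1 / n) *
          ‖cfc (fun t : ℝ => t ^ (n / 2))
              (p * cfc (fun t : ℝ => t ^ (2 * (1 - α))) (absA (star x)) * star p) +
            cfc (fun t : ℝ => t ^ (n / 2))
              (r * cfc (fun t : ℝ => t ^ (2 * (1 - α))) (absA (star y)) * star r)‖ +
        ((n - 1) / n) *
          (‖star q * cfc (fun t : ℝ => t ^ (2 * α)) (absA x) * q‖ ^ (n / (2 * (n - 1))) +
            ‖star s * cfc (fun t : ℝ => t ^ (2 * α)) (absA y) * s‖ ^ (n / (2 * (n - 1)))) := by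
  have hP : ∀ a w : A, 0 ≤ a * (w * star w) ^ (1 - α) * star a :=
    fun a w => star_right_conjugate_nonneg rpow_nonneg a
  have hn0 : 0 < n := by linarith
  rw [cfc_rpow_two_mul_absA hx, cfc_rpow_two_mul_absA hy, cfc_rpow_two_mul_absA hx.star,
    cfc_rpow_two_mul_absA hy.star, star_star, star_star, ← rpow_eq_cfc_real (hP p x),
    ← rpow_eq_cfc_real (hP r y)]
  refine Real.sSup_le ?_ (add_nonneg (by positivity)
    (mul_nonneg (div_nonneg (by linarith) hn0.le) (by positivity)))
  rintro _ ⟨g, hg, rfl⟩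
  set P₁ := p * (x * star x) ^ (1 - α) * star p
  set P₂ := r * (y * star y) ^ (1 - α) * star r
  set Q₁ := star q * (star x * x) ^ α * q
  set Q₂ := star s * (star y * y) ^ α * s
  calc ‖g (p * x * q + r * y * s)‖ ≤ ‖g (p * x * q)‖ + ‖g (r * y * s)‖ :=
        map_add g _ _ ▸ norm_add_le _ _
    _ ≤ (1 / n) * (g (P₁ ^ (n / 2) + P₂ ^ (n / 2))).re +
          ((n - 1) / n) * (‖Q₁‖ ^ (n / (2 * (n - 1))) + ‖Q₂‖ ^ (n / (2 * (n - 1)))) := by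
        rw [map_add, Complex.add_re]
        linarith [hg.norm_apply_mul_mul_le p q hx α hn, hg.norm_apply_mul_mul_le r s hy α hn]
    _ ≤ _ := by
        gcongr
        exact hg.re_apply_le_norm_s19 (add_nonneg rpow_nonneg rpow_nonneg)

/-- numerical radius bound for `p x q + r y s` with `x, y` invertible. -/
theorem stmt19 (p q r s x y : A) (hx : IsUnit x) (hy : IsUnit y)
    (α : ℝ) (hα0 : 0 ≤ α) (hα1 : α ≤ 1) (n : ℝ) (hn : 2 ≤ n) :
    nr (p * x * q + r * y * s) ≤
      (1 / n) *
          ‖cfc (fun t : ℝ => t ^ (n / 2))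
              (p * cfc (fun t : ℝ => t ^ (2 * (1 - α))) (absA (star x)) * star p) +
            cfc (fun t : ℝ => t ^ (n / 2))
              (r * cfc (fun t : ℝ => t ^ (2 * (1 - α))) (absA (star y)) * star r)‖ +
        ((n - 1) / n) *
          (‖star q * cfc (fun t : ℝ => t ^ (2 * α)) (absA x) * q‖ ^ (n / (2 * (n - 1))) +
            ‖star s * cfc (fun t : ℝ => t ^ (2 * α)) (absA y) * s‖ ^ (n / (2 * (n - 1)))) :=
  stmt19_general p q r s x y hx hy α n hn
end
end
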